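/- arXiv:1312.0583 — 4 statements merged into one kernel-verified Lean document; each statement's English description precedes it below -/
import Mathlib

section
/- Define polynomials P_n by P_0 = 1, P_1 = x - 1, and P_n = (x-2) P_{n-1} - P_{n-2} for n ≥ 2. Then the coefficient array of (P_n) is the Riordan array (1/(1+x), x/(1+x)^2); that is, P_n(x) = Σ_k ([x^n] (1/(1+x)) (x/(1+x)^2)^k) x^k. -/
/-!
Write `c k = (1+x)⁻¹ (x/(1+x)²)^k` for the `k`-th column of the Riordan array. Multiplying by
powers of `1 + x` gives `(1+x)² c (k+1) = x c k` and `(1+x) c 0 = 1`; comparing coefficients,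
the entries `[x^n] c k` obey the recurrence that `P_{n+2} = (x-2) P_{n+1} - P_n` imposes on
the coefficients of `P_n`, and the first two rows agree with `P_0 = 1`, `P_1 = x - 1`.
-/

open PowerSeries

namespace PowerSeries

section CommRing

variable {R : Type*} [CommRing R]

theorem coeff_succ_succ_one_add_X_sq_mul (n : ℕ) (φ : R⟦X⟧) :
    coeff (n + 2) ((1 + X) ^ 2 * φ) = coeff (n + 2) φ + 2 * coeff (n + 1) φ + coeff n φ := by
  have : (1 + X) ^ 2 * φ = φ + (X * φ + X * φ) + X * (X * φ) := by ring
  rw [this]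
  simp only [map_add, coeff_succ_X_mul]
  ring

theorem coeff_one_one_add_X_sq_mul (φ : R⟦X⟧) :
    coeff 1 ((1 + X) ^ 2 * φ) = coeff 1 φ + 2 * coeff 0 φ := by
  have : (1 + X) ^ 2 * φ = φ + (X * φ + X * φ) + X * (X * φ) := by ring
  rw [this]
  simp only [map_add, coeff_succ_X_mul, coeff_zero_X_mul]
  ring

theorem coeff_succ_one_add_X_mul (n : ℕ) (φ : R⟦X⟧) :
    coeff (n + 1) ((1 + X) * φ) = coeff (n + 1) φ + coeff n φ := by
  rw [add_mul, one_mul, map_add, coeff_succ_X_mul]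

end CommRing

noncomputable def riordanColumn (K : Type*) [Field K] (k : ℕ) : K⟦X⟧ :=
  (1 + X)⁻¹ * (X * ((1 + X)⁻¹) ^ 2) ^ k

variable {K : Type*} [Field K]

theorem one_add_X_mul_inv_one_add_X : (1 + X : K⟦X⟧) * (1 + X)⁻¹ = 1 :=
  PowerSeries.mul_inv_cancel _ (by simp)

theorem one_add_X_mul_riordanColumn_zero : (1 + X) * riordanColumn K 0 = 1 := by
  rw [riordanColumn, pow_zero, mul_one, one_add_X_mul_inv_one_add_X]

theorem one_add_X_sq_mul_riordanColumn_succ (k : ℕ) :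
    (1 + X) ^ 2 * riordanColumn K (k + 1) = X * riordanColumn K k := by
  calc (1 + X) ^ 2 * riordanColumn K (k + 1)
      = ((1 + X) * (1 + X)⁻¹) ^ 2 * (X * riordanColumn K k) := by
        simp only [riordanColumn]; ring
    _ = X * riordanColumn K k := by rw [one_add_X_mul_inv_one_add_X, one_pow, one_mul]

theorem coeff_zero_riordanColumn (k : ℕ) :
    coeff 0 (riordanColumn K k) = if k = 0 then 1 else 0 := by
  have h : constantCoeff (1 + X : K⟦X⟧)⁻¹ = 1 := by simp
  rcases k with _ | k <;> simp [riordanColumn, coeff_zero_eq_constantCoeff, h]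

theorem coeff_succ_riordanColumn_zero (n : ℕ) :
    coeff (n + 1) (riordanColumn K 0) = -coeff n (riordanColumn K 0) := by
  have h := congrArg (coeff (n + 1)) (one_add_X_mul_riordanColumn_zero (K := K))
  rw [coeff_succ_one_add_X_mul, coeff_one, if_neg n.succ_ne_zero] at h
  linear_combination h

theorem coeff_one_riordanColumn_succ (k : ℕ) :
    coeff 1 (riordanColumn K (k + 1)) = if k = 0 then 1 else 0 := by
  have h := congrArg (coeff 1) (one_add_X_sq_mul_riordanColumn_succ (K := K) k)
  rw [coeff_one_one_add_X_sq_mul, coeff_succ_X_mul, coeff_zero_riordanColumn,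
    coeff_zero_riordanColumn, if_neg k.succ_ne_zero] at h
  linear_combination h

theorem coeff_succ_succ_riordanColumn_succ (n k : ℕ) :
    coeff (n + 2) (riordanColumn K (k + 1)) = coeff (n + 1) (riordanColumn K k)
      - 2 * coeff (n + 1) (riordanColumn K (k + 1)) - coeff n (riordanColumn K (k + 1)) := by
  have h := congrArg (coeff (n + 2)) (one_add_X_sq_mul_riordanColumn_succ (K := K) k)
  rw [coeff_succ_succ_one_add_X_sq_mul, coeff_succ_X_mul] at h
  linear_combination h

end PowerSeries

namespace Polynomial

variable {R : Type*} [CommRing R]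

theorem coeff_zero_X_sub_two_mul_sub (p q : R[X]) :
    ((X - 2) * p - q).coeff 0 = -2 * p.coeff 0 - q.coeff 0 := by
  simp [sub_mul, coeff_ofNat_mul]

theorem coeff_succ_X_sub_two_mul_sub (k : ℕ) (p q : R[X]) :
    ((X - 2) * p - q).coeff (k + 1) = p.coeff k - 2 * p.coeff (k + 1) - q.coeff (k + 1) := by
  simp [sub_mul, coeff_ofNat_mul]

end Polynomial

/-- The polynomials `P_0 = 1`, `P_1 = x - 1`, `P_n = (x-2)P_{n-1} - P_{n-2}` have
coefficient array equal to the Riordan array `(1/(1+x), x/(1+x)^2)`: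
the coefficient of `x^k` in `P_n` is `[x^n] (1/(1+x)) (x/(1+x)^2)^k`. -/
theorem coeff_array_P (P : ℕ → Polynomial ℚ)
    (h0 : P 0 = 1) (h1 : P 1 = Polynomial.X - 1)
    (hrec : ∀ n, P (n + 2) = (Polynomial.X - 2) * P (n + 1) - P n) :
    ∀ n k, (P n).coeff k = coeff (R := ℚ) n ((1 + X)⁻¹ * (X * ((1 + X)⁻¹) ^ 2) ^ k) := by
  show ∀ n k, (P n).coeff k = coeff n (riordanColumn ℚ k)
  intro n
  induction n using Nat.twoStepInduction with
  | zero =>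
    intro k
    rw [h0, Polynomial.coeff_one, coeff_zero_riordanColumn, eq_comm]
  | one =>
    rintro (_ | k)
    · rw [coeff_succ_riordanColumn_zero, coeff_zero_riordanColumn, h1]
      simp
    · rw [coeff_one_riordanColumn_succ, h1]
      simp [Polynomial.coeff_X, Polynomial.coeff_one]
  | more n ih₀ ih₁ =>
    rintro (_ | k)
    · rw [hrec, Polynomial.coeff_zero_X_sub_two_mul_sub, ih₀, ih₁,
        coeff_succ_riordanColumn_zero (n + 1), coeff_succ_riordanColumn_zero n]
      ring
    · rw [hrec, Polynomial.coeff_succ_X_sub_two_mul_sub, ih₀, ih₁, ih₁,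
        coeff_succ_succ_riordanColumn_succ]
end

section
/- Define polynomials Q_n by Q_0 = 1, Q_1 = x - 2, and Q_n = (x-2) Q_{n-1} - Q_{n-2} for n ≥ 2. Then the coefficient array of (Q_n) is the Riordan array (1/(1+x)^2, x/(1+x)^2). -/
/-!
Let `F k = (1 + x)⁻² (x (1 + x)⁻²)ᵏ` be the `k`-th column of the Riordan array. Clearing
denominators gives `(1 + x)² F 0 = 1` and `(1 + x)² F (k + 1) = x F k`, and comparing coefficients
of `x^(n+2)` turns these into
`[x^(n+2)] F (k+1) = [x^(n+1)] F k - 2 [x^(n+1)] F (k+1) - [x^n] F (k+1)`,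
which is the recurrence `Q (n+2) = (x - 2) Q (n+1) - Q n` read coefficientwise. The two arrays
also agree on rows `0` and `1`, so they agree everywhere.
-/

open PowerSeries

section

variable {R : Type*} [CommSemiring R]

theorem PowerSeries.coeff_zero_one_add_X_sq_mul (f : R⟦X⟧) :
    coeff 0 ((1 + X) ^ 2 * f) = coeff 0 f := by
  rw [show (1 + X) ^ 2 * f = f + X * (f + f + X * f) by ring, map_add, coeff_zero_X_mul, add_zero]

theorem PowerSeries.coeff_one_one_add_X_sq_mul_s10 (f : R⟦X⟧) :
    coeff 1 ((1 + X) ^ 2 * f) = coeff 1 f + 2 * coeff 0 f := by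
  rw [show (1 + X) ^ 2 * f = f + X * (f + f + X * f) by ring, map_add, coeff_succ_X_mul,
    map_add, map_add, coeff_zero_X_mul]
  ring

theorem PowerSeries.coeff_add_two_one_add_X_sq_mul (f : R⟦X⟧) (n : ℕ) :
    coeff (n + 2) ((1 + X) ^ 2 * f) = coeff (n + 2) f + 2 * coeff (n + 1) f + coeff n f := by
  rw [show (1 + X) ^ 2 * f = f + X * (f + f + X * f) by ring, map_add, coeff_succ_X_mul,
    map_add, map_add, coeff_succ_X_mul]
  ring

end

section

variable {R : Type*} [Ring R]

theorem Polynomial.coeff_zero_X_sub_two_mul_sub_s10 (p q : Polynomial R) :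
    ((X - 2) * p - q).coeff 0 = -2 * p.coeff 0 - q.coeff 0 := by
  simp [sub_mul]

theorem Polynomial.coeff_succ_X_sub_two_mul_sub_s10 (p q : Polynomial R) (k : ℕ) :
    ((X - 2) * p - q).coeff (k + 1) = p.coeff k - 2 * p.coeff (k + 1) - q.coeff (k + 1) := by
  simp [sub_mul, coeff_X_mul]

end

namespace RiordanQ

variable {K : Type*} [Field K]

noncomputable def column (k : ℕ) : K⟦X⟧ :=
  ((1 + X)⁻¹) ^ 2 * (X * ((1 + X)⁻¹) ^ 2) ^ k

theorem one_add_X_mul_inv : (1 + X : K⟦X⟧) * (1 + X)⁻¹ = 1 :=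
  PowerSeries.mul_inv_cancel _ (by simp)

theorem one_add_X_sq_mul_column_zero : (1 + X) ^ 2 * column 0 = (1 : K⟦X⟧) := by
  rw [column, pow_zero, mul_one, ← mul_pow, one_add_X_mul_inv, one_pow]

theorem one_add_X_sq_mul_column_succ (k : ℕ) :
    (1 + X) ^ 2 * column (k + 1) = X * column (K := K) k := by
  rw [column, column, show ∀ a b : K⟦X⟧, a ^ 2 * (b ^ 2 * (X * b ^ 2) ^ (k + 1)) =
    (a * b) ^ 2 * (X * (b ^ 2 * (X * b ^ 2) ^ k)) from fun _ _ ↦ by ring,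
    one_add_X_mul_inv, one_pow, one_mul]

theorem coeff_zero_column (k : ℕ) : coeff 0 (column k) = (1 : Polynomial K).coeff k := by
  rw [← coeff_zero_one_add_X_sq_mul]
  cases k with
  | zero => simp [one_add_X_sq_mul_column_zero]
  | succ k => simp [one_add_X_sq_mul_column_succ, Polynomial.coeff_one]

theorem coeff_one_column (k : ℕ) :
    coeff 1 (column k) = (Polynomial.X - 2 : Polynomial K).coeff k := by
  rw [eq_sub_of_add_eq (coeff_one_one_add_X_sq_mul_s10 (column (K := K) k)).symm, coeff_zero_column]
  cases k with
  | zero => simp [one_add_X_sq_mul_column_zero]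
  | succ k =>
    simp [one_add_X_sq_mul_column_succ, coeff_zero_column, Polynomial.coeff_X, Polynomial.coeff_one]

theorem coeff_add_two_column_zero (n : ℕ) :
    coeff (n + 2) (column (K := K) 0) = -2 * coeff (n + 1) (column 0) - coeff n (column 0) := by
  have h := coeff_add_two_one_add_X_sq_mul (column (K := K) 0) n
  rw [one_add_X_sq_mul_column_zero, coeff_one, if_neg (by omega)] at h
  linear_combination -h

theorem coeff_add_two_column_succ (n k : ℕ) :
    coeff (n + 2) (column (K := K) (k + 1)) =
      coeff (n + 1) (column k) - 2 * coeff (n + 1) (column (k + 1)) - coeff n (column (k + 1)) := by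
  have h := coeff_add_two_one_add_X_sq_mul (column (K := K) (k + 1)) n
  rw [one_add_X_sq_mul_column_succ, coeff_succ_X_mul] at h
  linear_combination -h

end RiordanQ

/-- The polynomials `Q_0 = 1`, `Q_1 = x - 2`, `Q_n = (x-2)Q_{n-1} - Q_{n-2}` have
coefficient array equal to the Riordan array `(1/(1+x)^2, x/(1+x)^2)`:
the coefficient of `x^k` in `Q_n` is `[x^n] (1/(1+x)^2) (x/(1+x)^2)^k`. -/
theorem coeff_array_Q (Q : ℕ → Polynomial ℚ)
    (h0 : Q 0 = 1) (h1 : Q 1 = Polynomial.X - 2)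
    (hrec : ∀ n, Q (n + 2) = (Polynomial.X - 2) * Q (n + 1) - Q n) :
    ∀ n k, (Q n).coeff k
      = coeff (R := ℚ) n (((1 + X)⁻¹) ^ 2 * (X * ((1 + X)⁻¹) ^ 2) ^ k) := by
  show ∀ n k, (Q n).coeff k = coeff n (RiordanQ.column k)
  intro n
  induction n using Nat.twoStepInduction with
  | zero => simp [h0, RiordanQ.coeff_zero_column]
  | one => simp [h1, RiordanQ.coeff_one_column]
  | more n ih0 ih1 =>
    rintro (_ | k)
    · rw [hrec, Polynomial.coeff_zero_X_sub_two_mul_sub_s10, RiordanQ.coeff_add_two_column_zero,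
        ih0, ih1]
    · rw [hrec, Polynomial.coeff_succ_X_sub_two_mul_sub_s10, RiordanQ.coeff_add_two_column_succ,
        ih0, ih1, ih1]
end

section
/- Given a Riordan array A = (u, v) such that v/x has a square root r(x) as a formal power series with r(0) = 1, the Riordan array R = (u, x·r(x)) has the property that A(n,k) = R(n+k, 2k) for all n ≥ k ≥ 0; i.e., A embeds into R as the even-column array. -/
open PowerSeries

theorem PowerSeries.coeff_X_pow_mul_eq_coeff_add {R : Type*} [Semiring R]
    (f : R⟦X⟧) (n k m : ℕ) :
    coeff n (X ^ k * f) = coeff (n + m) (X ^ (k + m) * f) := by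
  rw [coeff_X_pow_mul', coeff_X_pow_mul', Nat.add_sub_add_right]
  exact if_congr (Nat.add_le_add_iff_right).symm rfl rfl

theorem embedding_of_square_root_general (u v r : PowerSeries ℤ)
    (hv : v = X * r ^ 2)
    (n k : ℕ) :
    coeff n (u * v ^ k) = coeff (n + k) (u * (X * r) ^ (2 * k)) := by
  have column_of_A : u * v ^ k = X ^ k * (u * r ^ (2 * k)) := by rw [hv]; ring
  have even_column_of_R : u * (X * r) ^ (2 * k) = X ^ (k + k) * (u * r ^ (2 * k)) := by ring
  rw [column_of_A, even_column_of_R]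
  exact coeff_X_pow_mul_eq_coeff_add _ n k k

/-- If the Riordan array `A = (u, v)` is such that `v/x` has a square root
`r` with `r 0 = 1` (i.e. `v = x r^2`), then `A` embeds into `R = (u, x r)` as the
even-column array: `A n k = R (n+k) (2k)` for all `n ≥ k ≥ 0`. -/
theorem embedding_of_square_root (u v r : PowerSeries ℤ)
    (hu : constantCoeff u = 1) (hr : constantCoeff r = 1)
    (hv : v = X * r ^ 2)
    (n k : ℕ) (hkn : k ≤ n) :
    coeff n (u * v ^ k) = coeff (n + k) (u * (X * r) ^ (2 * k)) :=
  embedding_of_square_root_general u v r hv n k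
end

section
/- Let P_n be defined by P_0 = 1, P_1 = x - 3, P_n = (x-7)P_{n-1} - 12 P_{n-2} for n ≥ 2. Then the coefficient array of (P_n) is the Riordan array (1/(1+3x), x/(1+7x+12x^2)). -/
/-!
Work with `1 + 7x + 12x² = (1 + cx)(1 + dx)` for `c = 3`, `d = 4`, and write `T(n, k)` for the
`(n, k)` entry of the Riordan array `(g, x/D)`, `g = 1/(1 + cx)`, `D = (1 + cx)(1 + dx)`.
Since `D · g (x/D)^(k+1) = x · g (x/D)^k`, comparing coefficients gives
`T(n+2, k+1) = T(n+1, k) - (c+d) T(n+1, k+1) - cd T(n, k+1)`, and column `0`, being `(-c)^n`, satisfies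
the same recurrence without the first term because `-c` is a root of `t² + (c+d)t + cd`.
This is exactly the recurrence for the coefficients of `P_{n+2} = (x - (c+d)) P_{n+1} - cd P_n`;
rows `0` and `1` agree because `(x/D)^k` has order `k`.
-/

open PowerSeries

section Riordan

variable {R : Type*} [CommSemiring R]

noncomputable def riordanEntry (g f : R⟦X⟧) (n k : ℕ) : R := coeff n (g * f ^ k)

theorem riordanEntry_X_mul (g q : R⟦X⟧) (n k : ℕ) :
    riordanEntry g (X * q) n k = if k ≤ n then coeff (n - k) (g * q ^ k) else 0 := by
  rw [riordanEntry, mul_pow, mul_left_comm, coeff_X_pow_mul']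

theorem coeff_add_two_factored_quadratic_mul (c d : R) (φ : R⟦X⟧) (n : ℕ) :
    coeff (n + 2) ((1 + C c * X) * (1 + C d * X) * φ)
      = coeff (n + 2) φ + (c + d) * coeff (n + 1) φ + c * d * coeff n φ := by
  rw [show (1 + C c * X) * (1 + C d * X) * φ
      = φ + X * (C (c + d) * φ) + X * (X * (C (c * d) * φ)) by simp only [map_add, map_mul]; ring,
    map_add, map_add, coeff_succ_X_mul, coeff_succ_X_mul, coeff_succ_X_mul,
    coeff_C_mul, coeff_C_mul]

end Riordan

theorem Polynomial.coeff_X_sub_C_mul_sub_C_mul {R : Type*} [CommRing R] (a b : R)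
    (p q : Polynomial R) (k : ℕ) :
    ((Polynomial.X - Polynomial.C a) * p - Polynomial.C b * q).coeff k
      = (Polynomial.X * p).coeff k - a * p.coeff k - b * q.coeff k := by
  rw [sub_mul, Polynomial.coeff_sub, Polynomial.coeff_sub, Polynomial.coeff_C_mul,
    Polynomial.coeff_C_mul]

section Field

variable {K : Type*} [Field K] (c d : K)

theorem coeff_inv_one_add_C_mul_X (n : ℕ) : coeff n (1 + C c * X)⁻¹ = (-c) ^ n := by
  induction n with
  | zero => simp [coeff_zero_eq_constantCoeff]
  | succ n ih =>
    set φ := (1 + C c * X)⁻¹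
    have h := congrArg (coeff (n + 1)) (PowerSeries.mul_inv_cancel (1 + C c * X) (by simp))
    rw [show (1 + C c * X) * φ = φ + X * (C c * φ) by ring, map_add, coeff_succ_X_mul,
      coeff_C_mul, ih, coeff_one, if_neg n.succ_ne_zero] at h
    linear_combination h

local notation "g" => (1 + C c * X)⁻¹
local notation "D" => (1 + C c * X) * (1 + C d * X)

theorem riordanEntry_zero_left (k : ℕ) :
    riordanEntry g (X * D⁻¹) 0 k = if k = 0 then 1 else 0 := by
  rw [riordanEntry_X_mul]
  rcases k with _ | k
  · simp [coeff_zero_eq_constantCoeff]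
  · simp

theorem riordanEntry_one_left (k : ℕ) :
    riordanEntry g (X * D⁻¹) 1 k = if k = 0 then -c else if k = 1 then 1 else 0 := by
  rw [riordanEntry_X_mul]
  rcases k with _ | _ | k
  · simpa using coeff_inv_one_add_C_mul_X c 1
  · simp [coeff_zero_eq_constantCoeff]
  · simp

theorem riordanEntry_add_two_zero (n : ℕ) :
    riordanEntry g (X * D⁻¹) (n + 2) 0
      = -(c + d) * riordanEntry g (X * D⁻¹) (n + 1) 0 - c * d * riordanEntry g (X * D⁻¹) n 0 := by
  simp only [riordanEntry, pow_zero, mul_one, coeff_inv_one_add_C_mul_X]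
  ring

theorem riordanEntry_add_two_succ (n k : ℕ) :
    riordanEntry g (X * D⁻¹) (n + 2) (k + 1)
      = riordanEntry g (X * D⁻¹) (n + 1) k - (c + d) * riordanEntry g (X * D⁻¹) (n + 1) (k + 1)
        - c * d * riordanEntry g (X * D⁻¹) n (k + 1) := by
  have hD : D * (g * (X * D⁻¹) ^ (k + 1)) = X * (g * (X * D⁻¹) ^ k) := by
    calc D * (g * (X * D⁻¹) ^ (k + 1)) = (D * D⁻¹) * (X * (g * (X * D⁻¹) ^ k)) := by ring
      _ = X * (g * (X * D⁻¹) ^ k) := by rw [PowerSeries.mul_inv_cancel _ (by simp), one_mul]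
  have h := coeff_add_two_factored_quadratic_mul c d (g * (X * D⁻¹) ^ (k + 1)) n
  rw [hD, coeff_succ_X_mul] at h
  simp only [riordanEntry]
  linear_combination -h

theorem coeff_eq_riordanEntry_of_three_term_recurrence (P : ℕ → Polynomial K)
    (h0 : P 0 = 1) (h1 : P 1 = Polynomial.X - Polynomial.C c)
    (hrec : ∀ n, P (n + 2)
      = (Polynomial.X - Polynomial.C (c + d)) * P (n + 1) - Polynomial.C (c * d) * P n)
    (n k : ℕ) : (P n).coeff k = riordanEntry g (X * D⁻¹) n k := by
  induction n using Nat.twoStepInduction generalizing k with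
  | zero => rw [h0, riordanEntry_zero_left, Polynomial.coeff_one, eq_comm]
  | one =>
    rw [h1, riordanEntry_one_left]
    rcases k with _ | _ | k <;> simp [Polynomial.coeff_X, Polynomial.coeff_C]
  | more n ih₀ ih₁ =>
    rw [hrec, Polynomial.coeff_X_sub_C_mul_sub_C_mul]
    rcases k with _ | k
    · rw [Polynomial.mul_coeff_zero, Polynomial.coeff_X_zero, zero_mul, ih₀, ih₁,
        riordanEntry_add_two_zero]
      ring
    · rw [Polynomial.coeff_X_mul, ih₀, ih₁, ih₁, riordanEntry_add_two_succ]

end Field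

/-- The polynomials `P_0 = 1`, `P_1 = x - 3`, `P_n = (x-7)P_{n-1} - 12 P_{n-2}` have
coefficient array equal to the Riordan array `(1/(1+3x), x/(1+7x+12x^2))`. -/
theorem coeff_array_P_347 (P : ℕ → Polynomial ℚ)
    (h0 : P 0 = 1) (h1 : P 1 = Polynomial.X - 3)
    (hrec : ∀ n, P (n + 2) = (Polynomial.X - 7) * P (n + 1) - 12 * P n) :
    ∀ n k, (P n).coeff k
      = coeff (R := ℚ) n ((1 + 3 * X)⁻¹ * (X * (1 + 7 * X + 12 * X ^ 2)⁻¹) ^ k) := by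
  intro n k
  have hg : (1 + C (3 : ℚ) * X) = 1 + 3 * X := by rw [map_ofNat]
  have hD : (1 + C (3 : ℚ) * X) * (1 + C 4 * X) = 1 + 7 * X + 12 * X ^ 2 := by
    simp only [map_ofNat]; ring
  rw [coeff_eq_riordanEntry_of_three_term_recurrence 3 4 P h0 (by rw [h1, map_ofNat])
    (fun m => by rw [hrec]; norm_num [map_ofNat]) n k, riordanEntry, hD, hg]
end
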